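/- Let C ∈ ch^q_F(A) and C' ∈ ch^{q'}_F(A) with q < q'. Then A_{X_{C'}} ∩ Sep(C, C') ≠ ∅, i.e. some hyperplane of A containing X_{C'} separates C from C'. -/

import Mathlib

open Set

namespace IY

/-- An affine hyperplane arrangement in `ℝ^ℓ`, given by `n` affine-linear forms
with nonzero linear parts; the `i`-th hyperplane is the zero set of `α i`. -/
structure Arrangement (ℓ n : ℕ) where
  α : Fin n → ((Fin ℓ → ℝ) →ᵃ[ℝ] ℝ)
  nonzero : ∀ i, (α i).linear ≠ 0

namespace Arrangement

variable {ℓ n : ℕ} (A : Arrangement ℓ n)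

/-- The hyperplane `H_i = {α_i = 0}`. -/
def H (i : Fin n) : Set (Fin ℓ → ℝ) := {x | A.α i x = 0}

/-- The real complement of the subarrangement indexed by `s`. -/
def compOn (s : Set (Fin n)) : Set (Fin ℓ → ℝ) := {x | ∀ i ∈ s, A.α i x ≠ 0}

/-- Chambers of the subarrangement indexed by `s` : connected components of its
real complement. -/
def IsChamberOn (s : Set (Fin n)) (C : Set (Fin ℓ → ℝ)) : Prop :=
  ∃ x ∈ A.compOn s, C = connectedComponentIn (A.compOn s) x

/-- Chambers of the full arrangement. -/
def IsChamber (C : Set (Fin ℓ → ℝ)) : Prop := A.IsChamberOn Set.univ C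

/-- The intersection poset of the subarrangement indexed by `s` : nonempty
intersections of subfamilies (the empty intersection giving `ℝ^ℓ`). -/
def LOn (s : Set (Fin n)) (X : Set (Fin ℓ → ℝ)) : Prop :=
  X.Nonempty ∧ ∃ t : Set (Fin n), t ⊆ s ∧ X = ⋂ i ∈ t, A.H i

/-- The intersection poset `L(A)`. -/
def L (X : Set (Fin ℓ → ℝ)) : Prop := A.LOn Set.univ X

/-- The real part of a point of `ℂ^ℓ`. -/
def reP {ℓ : ℕ} (z : Fin ℓ → ℂ) : Fin ℓ → ℝ := fun j => (z j).re

/-- The imaginary part of a point of `ℂ^ℓ`. -/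
def imP {ℓ : ℕ} (z : Fin ℓ → ℂ) : Fin ℓ → ℝ := fun j => (z j).im

/-- The point `x + iv` of `ℂ^ℓ`. -/
def mkC {ℓ : ℕ} (x v : Fin ℓ → ℝ) : Fin ℓ → ℂ := fun j => ⟨x j, v j⟩

/-- The complexified complement `M(A) = ℂ^ℓ \ ⋃ H_ℂ`; a point `x + iv` lies on
`H_ℂ = {α_ℂ = 0}` iff `α(x) = 0` and the linear part of `α` kills `v`. -/
def M : Set (Fin ℓ → ℂ) :=
  {z | ∀ i : Fin n, ¬(A.α i (reP z) = 0 ∧ (A.α i).linear (imP z) = 0)}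

end Arrangement

/-- Dimension of a subset of `ℝ^ℓ` (for affine subspaces, their dimension). -/
noncomputable def dimS {ℓ : ℕ} (X : Set (Fin ℓ → ℝ)) : ℕ :=
  Module.finrank ℝ (affineSpan ℝ X).direction

/-- The direction `τ(X)` of (the affine span of) a subset of `ℝ^ℓ`. -/
noncomputable def tau {ℓ : ℕ} (X : Set (Fin ℓ → ℝ)) : Submodule ℝ (Fin ℓ → ℝ) :=
  (affineSpan ℝ X).direction

/-- A flag in `ℝ^ℓ` given by defining affine-linear forms `h_1, …, h_ℓ`
(0-indexed: `h j` is the form `h_{j+1}`). -/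
structure Flag (ℓ : ℕ) where
  h : Fin ℓ → ((Fin ℓ → ℝ) →ᵃ[ℝ] ℝ)

namespace Flag

variable {ℓ : ℕ} (𝓕 : Flag ℓ)

/-- The flag subspace `F^q = {h_{q+1} = ⋯ = h_ℓ = 0}`. -/
def F (q : ℕ) : Set (Fin ℓ → ℝ) := {x | ∀ j : Fin ℓ, q ≤ (j : ℕ) → 𝓕.h j x = 0}

/-- `𝓕.hq q` is the form `h_q` in 1-indexed notation (junk value `0` out of range). -/
noncomputable def hq (q : ℕ) : (Fin ℓ → ℝ) →ᵃ[ℝ] ℝ :=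
  if hlt : q - 1 < ℓ then 𝓕.h ⟨q - 1, hlt⟩ else 0

end Flag

/-- Genericity of the flag: for every `X ∈ L(A)`, `F^q ∩ X` is an affine subspace
of dimension `q + dim X - ℓ`, empty when `q + dim X < ℓ`. -/
def GenericFlag {ℓ n : ℕ} (A : Arrangement ℓ n) (𝓕 : Flag ℓ) : Prop :=
  ∀ X, A.L X → ∀ q, q ≤ ℓ →
    (ℓ ≤ q + dimS X →
      ∃ W : AffineSubspace ℝ (Fin ℓ → ℝ), (W : Set (Fin ℓ → ℝ)).Nonempty ∧
        (W : Set (Fin ℓ → ℝ)) = 𝓕.F q ∩ X ∧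
        Module.finrank ℝ W.direction = q + dimS X - ℓ) ∧
    (q + dimS X < ℓ → 𝓕.F q ∩ X = ∅)

/-- Condition (1) of the Assumption, for the subarrangement indexed by `s`:
if a chamber `C` meets `F^q` but not `F^{q-1}`, then `h_q > 0` on `C ∩ F^q`. -/
def Cond1On {ℓ n : ℕ} (A : Arrangement ℓ n) (s : Set (Fin n)) (𝓕 : Flag ℓ) : Prop :=
  ∀ q : ℕ, 1 ≤ q → q ≤ ℓ → ∀ C, A.IsChamberOn s C →
    (C ∩ 𝓕.F q).Nonempty → C ∩ 𝓕.F (q - 1) = ∅ →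
    ∀ x ∈ C ∩ 𝓕.F q, 0 < 𝓕.hq q x

/-- Condition (2) of the Assumption, for the subarrangement indexed by `s`:
distinct `X, X'` in the intersection poset of dimension `ℓ - q` have different
`h_q`-values at their intersection points with `F^q`. -/
def Cond2On {ℓ n : ℕ} (A : Arrangement ℓ n) (s : Set (Fin n)) (𝓕 : Flag ℓ) : Prop :=
  ∀ q : ℕ, 1 ≤ q → q ≤ ℓ → ∀ X X', A.LOn s X → A.LOn s X' →
    dimS X = ℓ - q → dimS X' = ℓ - q → X ≠ X' →
    ∀ p ∈ X ∩ 𝓕.F q, ∀ p' ∈ X' ∩ 𝓕.F q, 𝓕.hq q p ≠ 𝓕.hq q p'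

/-- `C ∈ ch^q_F(A)` : `C` is a chamber meeting `F^q` but not `F^{q-1}`
(the latter condition being empty for `q = 0`, since `F^{-1} = ∅`). -/
def ChF {ℓ n : ℕ} (A : Arrangement ℓ n) (𝓕 : Flag ℓ) (q : ℕ)
    (C : Set (Fin ℓ → ℝ)) : Prop :=
  A.IsChamber C ∧ (C ∩ 𝓕.F q).Nonempty ∧ (q = 0 ∨ C ∩ 𝓕.F (q - 1) = ∅)

/-- `X = X_C` for `C ∈ ch^q_F(A)` : `X ∈ L(A)` has dimension `ℓ - q` and meets
`F^q` exactly in the unique minimum point of `h_q` on the closure of `C ∩ F^q`. -/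
def IsXC {ℓ n : ℕ} (A : Arrangement ℓ n) (𝓕 : Flag ℓ) (q : ℕ)
    (C X : Set (Fin ℓ → ℝ)) : Prop :=
  A.L X ∧ dimS X = ℓ - q ∧
  ∃ p : Fin ℓ → ℝ, X ∩ 𝓕.F q = {p} ∧ p ∈ closure (C ∩ 𝓕.F q) ∧
    ∀ y ∈ closure (C ∩ 𝓕.F q), 𝓕.hq q p ≤ 𝓕.hq q y

/-- Indices of the hyperplanes parallel to `X`, i.e. `A_{[X]} = {H : τ(X) ⊆ τ(H)}`. -/
def parIdx {ℓ n : ℕ} (A : Arrangement ℓ n) (X : Set (Fin ℓ → ℝ)) : Set (Fin n) :=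
  {i | tau X ≤ LinearMap.ker (A.α i).linear}

/-- `H_i ∈ Sep(C, C')` : the hyperplane `H_i` separates the chambers `C` and `C'`. -/
def SepCh {ℓ n : ℕ} (A : Arrangement ℓ n) (C C' : Set (Fin ℓ → ℝ)) (i : Fin n) : Prop :=
  ((∀ x ∈ C, 0 < A.α i x) ∧ (∀ y ∈ C', A.α i y < 0)) ∨
  ((∀ x ∈ C, A.α i x < 0) ∧ (∀ y ∈ C', 0 < A.α i y))

/-- `H_i ∈ Sep(p₁, p₂)` : the hyperplane `H_i` meets the segment `[p₁, p₂]`. -/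
def SepPt {ℓ n : ℕ} (A : Arrangement ℓ n) (p₁ p₂ : Fin ℓ → ℝ) (i : Fin n) : Prop :=
  ∃ w ∈ segment ℝ p₁ p₂, A.α i w = 0

/-- The piece `S(C)` attached to a chamber with `τ(X_C) = T` and base point `p`:
all `x + iv` with `v ∈ T` and `v ∉ τ(H)` for every `H ∈ Sep(p, x)`. -/
def S {ℓ n : ℕ} (A : Arrangement ℓ n) (T : Submodule ℝ (Fin ℓ → ℝ))
    (p : Fin ℓ → ℝ) : Set (Fin ℓ → ℂ) :=
  {z | Arrangement.imP z ∈ T ∧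
    ∀ i : Fin n, SepPt A p (Arrangement.reP z) i →
      (A.α i).linear (Arrangement.imP z) ≠ 0}

end IY

/-!
Suppose no hyperplane containing `X_{C'}` separates `C` from `C'`, and let `p = X_{C'} ∩ F^{q'}`,
the minimum point of `h_{q'}` on the closure of `C' ∩ F^{q'}`. Genericity of the flag gives
`h_{q'}(p) > 0` (otherwise `p ∈ F^{q'-1} ∩ X_{C'} = ∅`) and shows that every hyperplane through `p`
contains `X_{C'}` (otherwise `X_{C'} ∩ H` would be a smaller flat meeting `F^{q'}`). Pick
`x ∈ C ∩ F^q ⊆ F^{q'-1}`, so `h_{q'}(x) = 0`. Every hyperplane through `p` then has `x` on the side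
of `C'`, so moving from `p` slightly towards `x` stays in `C' ∩ F^{q'}` while strictly decreasing
`h_{q'}`, contradicting minimality at `p`.
-/

namespace IY

open Filter Topology

lemma dimS_coe {ℓ : ℕ} (W : AffineSubspace ℝ (Fin ℓ → ℝ)) :
    dimS (W : Set (Fin ℓ → ℝ)) = Module.finrank ℝ W.direction := by
  rw [dimS, AffineSubspace.affineSpan_coe]

namespace Arrangement

variable {ℓ n : ℕ} {A : Arrangement ℓ n}

section Chambers

variable {C C' : Set (Fin ℓ → ℝ)} {p x y w : Fin ℓ → ℝ}

-- `0 < A.α i x * A.α i y` says that `x` and `y` lie strictly on the same side of `H_i`.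

lemma IsChamber.pos_or_neg (hC : A.IsChamber C) (i : Fin n) :
    (∀ x ∈ C, 0 < A.α i x) ∨ (∀ x ∈ C, A.α i x < 0) := by
  obtain ⟨x₀, -, rfl⟩ := hC
  by_contra! h
  obtain ⟨⟨a, ha, ha0⟩, ⟨b, hb, hb0⟩⟩ := h
  obtain ⟨z, hz, hz0⟩ := isPreconnected_connectedComponentIn.intermediate_value₂ ha hb
    (A.α i).continuous_of_finiteDimensional.continuousOn continuousOn_const ha0 hb0
  exact connectedComponentIn_subset _ _ hz i (mem_univ i) hz0

lemma IsChamber.mul_pos (hC : A.IsChamber C) (hx : x ∈ C) (hy : y ∈ C) (i : Fin n) :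
    0 < A.α i x * A.α i y := by
  rcases hC.pos_or_neg i with h | h
  · exact _root_.mul_pos (h x hx) (h y hy)
  · exact mul_pos_of_neg_of_neg (h x hx) (h y hy)

lemma IsChamber.mul_pos_of_not_sepCh (hC : A.IsChamber C) (hC' : A.IsChamber C')
    (hx : x ∈ C) (hy : y ∈ C') {i : Fin n} (hsep : ¬ SepCh A C C' i) :
    0 < A.α i x * A.α i y := by
  rcases hC.pos_or_neg i with h | h <;> rcases hC'.pos_or_neg i with h' | h'
  · exact _root_.mul_pos (h x hx) (h' y hy)
  · exact absurd (Or.inl ⟨h, h'⟩) hsep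
  · exact absurd (Or.inr ⟨h, h'⟩) hsep
  · exact mul_pos_of_neg_of_neg (h x hx) (h' y hy)

lemma IsChamber.mem_of_mul_pos (hC : A.IsChamber C) (hy : y ∈ C)
    (hw : ∀ i, 0 < A.α i w * A.α i y) : w ∈ C := by
  obtain ⟨x₀, -, rfl⟩ := hC
  have hseg : segment ℝ w y ⊆ A.compOn univ := by
    rw [segment_eq_image_lineMap]
    rintro _ ⟨t, ⟨ht0, ht1⟩, rfl⟩ i -
    have hyy := (connectedComponentIn_subset _ _ hy) i (mem_univ i)
    rw [AffineMap.apply_lineMap, AffineMap.lineMap_apply_ring]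
    have hcombo : 0 < (1 - t) * (A.α i w * A.α i y) + t * (A.α i y * A.α i y) :=
      convex_Ioi 0 (hw i) (mul_self_pos.2 hyy) (by linarith) ht0 (by ring)
    intro h0
    exact hcombo.ne' (by linear_combination A.α i y * h0)
  rw [connectedComponentIn_eq hy]
  exact (convex_segment w y).isPreconnected.subset_connectedComponentIn
    (right_mem_segment ℝ w y) hseg (left_mem_segment ℝ w y)

lemma IsChamber.mul_nonneg_of_mem_closure (hC : A.IsChamber C) (hp : p ∈ closure C)
    (hy : y ∈ C) (i : Fin n) : 0 ≤ A.α i p * A.α i y :=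
  closure_minimal (fun _ hx => (hC.mul_pos hx hy i).le)
    (isClosed_le continuous_const
      ((A.α i).continuous_of_finiteDimensional.mul continuous_const)) hp

lemma IsChamber.eventually_lineMap_mem (hC : A.IsChamber C) (hp : p ∈ closure C)
    (hy : y ∈ C) (hx : ∀ i, A.α i p = 0 → 0 < A.α i x * A.α i y) :
    ∀ᶠ t in 𝓝[>] (0 : ℝ), AffineMap.lineMap p x t ∈ C := by
  have hside : ∀ i, ∀ᶠ t in 𝓝[>] (0 : ℝ), 0 < A.α i (AffineMap.lineMap p x t) * A.α i y := by
    intro i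
    simp only [AffineMap.apply_lineMap, AffineMap.lineMap_apply_ring']
    by_cases h0 : A.α i p = 0
    · filter_upwards [self_mem_nhdsWithin] with t ht
      rw [h0, sub_zero, add_zero, mul_assoc]
      exact _root_.mul_pos ht (hx i h0)
    · have hy0 : A.α i y ≠ 0 := left_ne_zero_of_mul (hC.mul_pos hy hy i).ne'
      have hpos : 0 < A.α i p * A.α i y :=
        (hC.mul_nonneg_of_mem_closure hp hy i).lt_of_ne (mul_ne_zero h0 hy0).symm
      have hcont : Continuous fun t : ℝ => (t * (A.α i x - A.α i p) + A.α i p) * A.α i y := by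
        fun_prop
      exact nhdsWithin_le_nhds (hcont.continuousAt.eventually (lt_mem_nhds (by simpa using hpos)))
  filter_upwards [eventually_all.2 hside] with t ht using hC.mem_of_mul_pos hy ht

end Chambers

section IntersectionPoset

variable {X : Set (Fin ℓ → ℝ)}

variable (A) in
def hyperplane (i : Fin n) : AffineSubspace ℝ (Fin ℓ → ℝ) := (affineSpan ℝ {0}).comap (A.α i)

variable (A) in
@[simp]
lemma coe_hyperplane (i : Fin n) : (A.hyperplane i : Set (Fin ℓ → ℝ)) = A.H i := by
  ext x
  simp [hyperplane, H]

lemma LOn.exists_affineSubspace {s : Set (Fin n)} (hX : A.LOn s X) :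
    ∃ W : AffineSubspace ℝ (Fin ℓ → ℝ), (W : Set (Fin ℓ → ℝ)) = X := by
  obtain ⟨-, t, -, rfl⟩ := hX
  exact ⟨⨅ i ∈ t, A.hyperplane i, by simp⟩

lemma L.inter_H (hX : A.L X) {i : Fin n} (hne : (X ∩ A.H i).Nonempty) : A.L (X ∩ A.H i) := by
  obtain ⟨-, t, -, rfl⟩ := hX
  exact ⟨hne, insert i t, subset_univ _, by rw [biInter_insert, inter_comm]⟩

lemma L.dimS_inter_H_lt (hX : A.L X) {i : Fin n} (hne : (X ∩ A.H i).Nonempty)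
    (hsub : ¬ X ⊆ A.H i) : dimS (X ∩ A.H i) < dimS X := by
  obtain ⟨W, rfl⟩ := hX.exists_affineSubspace
  have hinter : (W : Set (Fin ℓ → ℝ)) ∩ A.H i = ↑(W ⊓ A.hyperplane i) := by
    rw [← A.coe_hyperplane i]
    rfl
  rw [hinter] at hne ⊢
  rw [dimS_coe, dimS_coe]
  refine Submodule.finrank_lt_finrank_of_lt (AffineSubspace.direction_lt_of_nonempty
    (inf_le_left.lt_of_ne fun h => hsub ?_) hne)
  rw [← A.coe_hyperplane i]
  exact SetLike.coe_subset_coe.2 (inf_eq_left.1 h)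

end IntersectionPoset

end Arrangement

namespace Flag

variable {ℓ : ℕ} (𝓕 : Flag ℓ) {q q' : ℕ} {x y : Fin ℓ → ℝ}

lemma F_mono : Monotone 𝓕.F := fun _ _ hqq' _ hx j hj => hx j (hqq'.trans hj)

lemma lineMap_mem_F (hx : x ∈ 𝓕.F q) (hy : y ∈ 𝓕.F q) (t : ℝ) :
    AffineMap.lineMap x y t ∈ 𝓕.F q := fun j hj => by
  rw [AffineMap.apply_lineMap, hx j hj, hy j hj, AffineMap.lineMap_same_apply]

lemma hq_eq_zero_of_mem_F (hx : x ∈ 𝓕.F q) (hqq' : q < q') : 𝓕.hq q' x = 0 := by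
  unfold hq
  split_ifs with hlt
  · exact hx _ (by simp only; omega)
  · rfl

lemma mem_F_pred_of_hq_eq_zero (hx : x ∈ 𝓕.F q) (h0 : 𝓕.hq q x = 0) : x ∈ 𝓕.F (q - 1) := by
  intro j hj
  by_cases hqj : q ≤ j
  · exact hx j hqj
  · have hj' : q - 1 = j := by omega
    simpa [hq, hj', j.2] using h0

end Flag

section Assumption

variable {ℓ n : ℕ} {A : Arrangement ℓ n} {𝓕 : Flag ℓ} {q : ℕ} {X C : Set (Fin ℓ → ℝ)}
  {p : Fin ℓ → ℝ}

lemma GenericFlag.subset_H_of_mem (hgen : GenericFlag A 𝓕) (hX : A.L X) (hq : q ≤ ℓ)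
    (hdim : dimS X = ℓ - q) (hp : p ∈ X ∩ 𝓕.F q) {i : Fin n} (hi : p ∈ A.H i) :
    X ⊆ A.H i := by
  by_contra hsub
  have hne : (X ∩ A.H i).Nonempty := ⟨p, hp.1, hi⟩
  have hlt := hX.dimS_inter_H_lt hne hsub
  have hempty := (hgen _ (hX.inter_H hne) q hq).2 (by omega)
  exact hempty.subset ⟨hp.2, hp.1, hi⟩

lemma Cond1On.hq_nonneg_of_mem_closure (h1 : Cond1On A univ 𝓕) (hq1 : 1 ≤ q) (hqℓ : q ≤ ℓ)
    (hC : ChF A 𝓕 q C) (hp : p ∈ closure (C ∩ 𝓕.F q)) : 0 ≤ 𝓕.hq q p := by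
  obtain ⟨hCch, hCF, hCF' | hCF'⟩ := hC
  · omega
  · exact closure_minimal (fun x hx => (h1 q hq1 hqℓ C hCch hCF hCF' x hx).le)
      (isClosed_le continuous_const (𝓕.hq q).continuous_of_finiteDimensional) hp

end Assumption

open Arrangement

theorem level_lt_sep_general (ℓ n : ℕ) (A : Arrangement ℓ n) (𝓕 : Flag ℓ)
    (hgen : GenericFlag A 𝓕)
    (h1 : Cond1On A Set.univ 𝓕)
    (q q' : ℕ) (hq' : q' ≤ ℓ) (hqq' : q < q')
    (C C' X' : Set (Fin ℓ → ℝ))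
    (hC : ChF A 𝓕 q C) (hC' : ChF A 𝓕 q' C')
    (hX' : IsXC A 𝓕 q' C' X') :
    ∃ i : Fin n, X' ⊆ A.H i ∧ SepCh A C C' i := by
  by_contra! hnosep
  obtain ⟨hL', hdim', p', hXF, hpcl, hmin⟩ := hX'
  obtain ⟨x, hxC, hxF⟩ := hC.2.1
  obtain ⟨y, hyC', -⟩ := hC'.2.1
  have hp' : p' ∈ X' ∩ 𝓕.F q' := hXF.symm ▸ rfl
  have hpos : 0 < 𝓕.hq q' p' := by
    refine (h1.hq_nonneg_of_mem_closure (by omega) hq' hC' hpcl).lt_of_ne fun h0 => ?_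
    have hempty := (hgen X' hL' (q' - 1) (by omega)).2 (by omega)
    exact hempty.subset ⟨𝓕.mem_F_pred_of_hq_eq_zero hp'.2 h0.symm, hp'.1⟩
  have hside : ∀ i, A.α i p' = 0 → 0 < A.α i x * A.α i y := fun i hi =>
    hC.1.mul_pos_of_not_sepCh hC'.1 hxC hyC' (hnosep i (hgen.subset_H_of_mem hL' hq' hdim' hp' hi))
  obtain ⟨t, hwC', ht⟩ := ((hC'.1.eventually_lineMap_mem (closure_mono inter_subset_left hpcl)
    hyC' hside).and self_mem_nhdsWithin).exists
  have hwF := 𝓕.lineMap_mem_F hp'.2 (𝓕.F_mono hqq'.le hxF) t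
  have hle := hmin _ (subset_closure ⟨hwC', hwF⟩)
  rw [AffineMap.apply_lineMap, 𝓕.hq_eq_zero_of_mem_F hxF hqq', AffineMap.lineMap_apply_ring']
    at hle
  nlinarith [mul_pos ht hpos]

/-- If `C ∈ ch^q_F(A)`, `C' ∈ ch^{q'}_F(A)` with `q < q'`, then
some hyperplane of `A` containing `X_{C'}` separates `C` from `C'`. -/
theorem level_lt_sep (ℓ n : ℕ) (A : Arrangement ℓ n) (𝓕 : Flag ℓ)
    (hind : LinearIndependent ℝ fun j : Fin ℓ => (𝓕.h j).linear)
    (hgen : GenericFlag A 𝓕)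
    (h1 : Cond1On A Set.univ 𝓕) (h2 : Cond2On A Set.univ 𝓕)
    (q q' : ℕ) (hq' : q' ≤ ℓ) (hqq' : q < q')
    (C C' X' : Set (Fin ℓ → ℝ))
    (hC : ChF A 𝓕 q C) (hC' : ChF A 𝓕 q' C')
    (hX' : IsXC A 𝓕 q' C' X') :
    ∃ i : Fin n, X' ⊆ A.H i ∧ SepCh A C C' i :=
  level_lt_sep_general ℓ n A 𝓕 hgen h1 q q' hq' hqq' C C' X' hC hC' hX'

end IY
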